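/- arXiv:1704.04051 — 7 statements merged into one kernel-verified Lean document; each statement's English description precedes it below -/
import Mathlib

section
/- For a positive integer m and a prime p not dividing m, Φ_{mp}(x) = -Φ_m(x^p) · Ψ_m(x) · Σ_{u≥0} x^{um} as an identity of formal power series, where Ψ_m(x) = (x^m - 1)/Φ_m(x). -/
/-!
For `p ∤ m` one has `Φ_m(x^p) = Φ_{mp}(x) Φ_m(x)`, and `Φ_m Ψ_m = x^m - 1` by definition of `Ψ_m`.
So the right-hand side is `-Φ_{mp}(x) (x^m - 1) Σ x^{um}`, and `Σ x^{um}` is the geometric series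
`1/(1 - x)` expanded by `x ↦ x^m`, i.e. the inverse of `1 - x^m`.
-/

open Polynomial

/-- The `m`-th inverse cyclotomic polynomial `Ψ_m = (X^m - 1)/Φ_m`. -/
noncomputable def invCyclotomic (m : ℕ) : ℤ[X] := (X ^ m - 1) /ₘ cyclotomic m ℤ

theorem cyclotomic_mul_invCyclotomic (m : ℕ) : cyclotomic m ℤ * invCyclotomic m = X ^ m - 1 := by
  have hmod : (X ^ m - 1 : ℤ[X]) %ₘ cyclotomic m ℤ = 0 :=
    (modByMonic_eq_zero_iff_dvd (cyclotomic.monic m ℤ)).mpr (cyclotomic.dvd_X_pow_sub_one m ℤ)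
  have h := modByMonic_add_div (X ^ m - 1 : ℤ[X]) (cyclotomic m ℤ)
  rwa [hmod, zero_add] at h

namespace PowerSeries

variable {R : Type*} [CommRing R]

theorem mk_ite_dvd_eq_expand_mk_one {m : ℕ} (hm : m ≠ 0) :
    (mk fun t => if m ∣ t then (1 : R) else 0) = expand m hm (mk 1) := by
  ext n
  rw [coeff_expand, coeff_mk]
  split_ifs <;> simp

theorem X_pow_sub_one_mul_expand_mk_one {m : ℕ} (hm : m ≠ 0) :
    (X ^ m - 1 : R⟦X⟧) * expand m hm (mk 1) = -1 :=
  calc (X ^ m - 1 : R⟦X⟧) * expand m hm (mk 1) = expand m hm (-(mk 1 * (1 - X))) := by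
        simp only [map_neg, map_mul, map_sub, map_one, expand_X]
        ring
    _ = -1 := by rw [mk_one_mul_one_sub_eq_one, map_neg, map_one]

end PowerSeries

theorem cyclotomic_eq_neg_expand_mul_invCyclotomic_mul_geom (m p : ℕ) (hm : 0 < m)
    (hp : p.Prime) (hpm : ¬ p ∣ m) :
    ((cyclotomic (m * p) ℤ : ℤ[X]) : PowerSeries ℤ) =
      -(((Polynomial.expand ℤ p (cyclotomic m ℤ) : ℤ[X]) : PowerSeries ℤ) *
        ((invCyclotomic m : ℤ[X]) : PowerSeries ℤ) *
        PowerSeries.mk fun t => if m ∣ t then (1 : ℤ) else 0) := by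
  have hΨ : ((cyclotomic m ℤ : ℤ[X]) : PowerSeries ℤ) * (invCyclotomic m : PowerSeries ℤ) =
      PowerSeries.X ^ m - 1 := by
    rw [← coe_mul, cyclotomic_mul_invCyclotomic]
    push_cast
    rfl
  rw [cyclotomic_expand_eq_cyclotomic_mul hp hpm, coe_mul,
    mul_assoc ((cyclotomic (m * p) ℤ : ℤ[X]) : PowerSeries ℤ),
    hΨ, PowerSeries.mk_ite_dvd_eq_expand_mk_one hm.ne', mul_assoc,
    PowerSeries.X_pow_sub_one_mul_expand_mk_one, mul_neg_one, neg_neg]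
end

section
/- Let m be an odd squarefree positive integer and p a prime not dividing m, with r = p mod m. Then for every integer s, rem(x^{m - (s mod m)} · Ψ_m(x) · Φ_m(x^r), x^m - 1) = 0; in particular Ψ_m(x) · Φ_m(x^r) ≡ 0 (mod x^m - 1). -/
/-!
Since `p ∤ m`, `Φ_m(x^p) = Φ_{mp}(x) Φ_m(x)`, so `Ψ_m(x) Φ_m(x^p) = (x^m - 1) Φ_{mp}(x)`.
Because `x^p ≡ x^r` modulo `x^m - 1`, also `Φ_m(x^p) ≡ Φ_m(x^r)`, hence `x^m - 1` divides
`Ψ_m(x) Φ_m(x^r)` and any multiple of it.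
-/

open Polynomial

theorem pow_sub_one_dvd_pow_sub_pow_mod {R : Type*} [CommRing R] (x : R) (m n : ℕ) :
    x ^ m - 1 ∣ x ^ n - x ^ (n % m) := by
  have h : x ^ n - x ^ (n % m) = x ^ (n % m) * (x ^ (m * (n / m)) - 1) := by
    rw [mul_sub, mul_one, ← pow_add, Nat.mod_add_div]
  rw [h]
  exact (pow_one_sub_dvd_pow_mul_sub_one x m (n / m)).mul_left _

theorem X_pow_sub_one_dvd_expand_sub_expand_mod {R : Type*} [CommRing R] (f : R[X]) (m n : ℕ) :
    (X ^ m - 1 : R[X]) ∣ expand R n f - expand R (n % m) f := by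
  have h := sub_dvd_eval_sub ((X : R[X]) ^ n) (X ^ (n % m)) (f.map C)
  rw [eval_map, eval_map] at h
  exact (pow_sub_one_dvd_pow_sub_pow_mod X m n).trans h

theorem X_pow_sub_one_dvd_invCyclotomic_mul_expand_cyclotomic {m p : ℕ} (hp : p.Prime)
    (hpm : ¬ p ∣ m) : X ^ m - 1 ∣ invCyclotomic m * expand ℤ p (cyclotomic m ℤ) := by
  rw [cyclotomic_expand_eq_cyclotomic_mul hp hpm, ← cyclotomic_mul_invCyclotomic]
  exact ⟨cyclotomic (m * p) ℤ, by ring⟩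

theorem X_pow_sub_one_dvd_invCyclotomic_mul_expand_mod_cyclotomic {m p : ℕ} (hp : p.Prime)
    (hpm : ¬ p ∣ m) : X ^ m - 1 ∣ invCyclotomic m * expand ℤ (p % m) (cyclotomic m ℤ) := by
  have h := dvd_sub (X_pow_sub_one_dvd_invCyclotomic_mul_expand_cyclotomic hp hpm)
    ((X_pow_sub_one_dvd_expand_sub_expand_mod (cyclotomic m ℤ) m p).mul_left (invCyclotomic m))
  rwa [← mul_sub, sub_sub_cancel] at h

theorem rotate_invCyclotomic_mul_expand_cyclotomic_eq_zero_general (m p : ℕ) (hp : p.Prime)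
    (hpm : ¬ p ∣ m) :
    ∀ s : ℤ,
      (X ^ (m - (s % (m : ℤ)).toNat) * (invCyclotomic m *
          Polynomial.expand ℤ (p % m) (cyclotomic m ℤ))) %ₘ (X ^ m - 1) = 0 := by
  intro s
  have hm : m ≠ 0 := by
    rintro rfl
    exact hpm (dvd_zero p)
  rw [modByMonic_eq_zero_iff_dvd (by simpa using monic_X_pow_sub_C (1 : ℤ) hm)]
  exact (X_pow_sub_one_dvd_invCyclotomic_mul_expand_mod_cyclotomic hp hpm).mul_left _

/-- For every integer `s`, `rem(x^{m - (s mod m)} · Ψ_m(x) · Φ_m(x^r), x^m - 1) = 0`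
where `r = p mod m`. -/
theorem rotate_invCyclotomic_mul_expand_cyclotomic_eq_zero (m p : ℕ) (hm : 0 < m)
    (hodd : Odd m) (hsf : Squarefree m) (hp : p.Prime) (hpm : ¬ p ∣ m) :
    ∀ s : ℤ,
      (X ^ (m - (s % (m : ℤ)).toNat) * (invCyclotomic m *
          Polynomial.expand ℤ (p % m) (cyclotomic m ℤ))) %ₘ (X ^ m - 1) = 0 :=
  rotate_invCyclotomic_mul_expand_cyclotomic_eq_zero_general m p hp hpm
end

section
/- Let m be an odd squarefree positive integer and p a prime not dividing m, with q = ⌊p/m⌋ and r = p mod m. With blocks f_{m,p,i,j} defined by the base-x^p then base-x^m digit decomposition of Φ_{mp}, we have f_{m,p,i,q} = rem(f_{m,p,i,0}, x^r) for all 0 ≤ i ≤ φ(m)-1 (the last block is the truncation of the first block to degree < r). -/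
open Polynomial

/-!
For `p ∤ m` one has `expand p Φ_m = Φ_{mp} Φ_m`, hence
`(X^m - 1) Φ_{mp} = Ψ_m · Φ_m(X^p)` with `Ψ_m = (X^m - 1) / Φ_m` of degree `m - φ(m) < m`.
The right-hand side has no monomial `X^n` with `n mod p ≥ m`, so on each stretch
`[i p, i p + p)` the coefficients of `Φ_{mp}` are `m`-periodic. The `j`-th base-`X^m` digit of
the `i`-th base-`X^p` digit therefore repeats the first one, as far as it reaches below `X^p`.
-/

/-- The block `f_{m,p,i,j}` of `Φ_{mp}`: the `j`-th base-`x^m` digit of the `i`-th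
base-`x^p` digit of `Φ_{mp}`. -/
noncomputable def cycBlock (m p i j : ℕ) : ℤ[X] :=
  ∑ k ∈ Finset.range m,
    if j * m + k < p then C ((cyclotomic (m * p) ℤ).coeff (i * p + j * m + k)) * X ^ k else 0

section

variable {R : Type*} [CommRing R] {m p : ℕ}

theorem X_pow_sub_one_mul_cyclotomic_mul_prime (hp : p.Prime) (hpm : ¬p ∣ m) :
    (X ^ m - 1) * cyclotomic (m * p) R =
      ((X ^ m - 1) /ₘ cyclotomic m R) * expand R p (cyclotomic m R) := by
  have hdvd : (X ^ m - 1 : R[X]) %ₘ cyclotomic m R = 0 :=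
    (modByMonic_eq_zero_iff_dvd (cyclotomic.monic m R)).2 (cyclotomic.dvd_X_pow_sub_one m R)
  conv_lhs => rw [← modByMonic_add_div (X ^ m - 1 : R[X]) (cyclotomic m R), hdvd, zero_add]
  rw [cyclotomic_expand_eq_cyclotomic_mul hp hpm]
  ring

theorem natDegree_X_pow_sub_one_divByMonic_cyclotomic_lt [Nontrivial R] (hm : 0 < m) :
    ((X ^ m - 1) /ₘ cyclotomic m R).natDegree < m := by
  rw [natDegree_divByMonic _ (cyclotomic.monic m R), natDegree_cyclotomic,
    ← C_1, natDegree_X_pow_sub_C]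
  exact Nat.sub_lt hm (Nat.totient_pos.2 hm)

theorem coeff_cyclotomic_mul_prime_eq_coeff_sub (hm : 0 < m) (hp : p.Prime) (hpm : ¬p ∣ m)
    {n : ℕ} (hn : m ≤ n % p) :
    (cyclotomic (m * p) R).coeff n = (cyclotomic (m * p) R).coeff (n - m) := by
  nontriviality R
  have hvanish : ((X ^ m - 1) * cyclotomic (m * p) R).coeff n = 0 := by
    rw [X_pow_sub_one_mul_cyclotomic_mul_prime hp hpm, coeff_mul]
    refine Finset.sum_eq_zero fun ⟨a, b⟩ hab => ?_
    rw [Finset.HasAntidiagonal.mem_antidiagonal] at hab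
    by_cases hb : p ∣ b
    · obtain ⟨l, rfl⟩ := hb
      have ha : m ≤ a := by
        rw [← hab, Nat.add_mul_mod_self_left] at hn
        exact hn.trans (Nat.mod_le a p)
      rw [coeff_eq_zero_of_natDegree_lt
        ((natDegree_X_pow_sub_one_divByMonic_cyclotomic_lt hm).trans_le ha), zero_mul]
    · rw [coeff_expand hp.pos, if_neg hb, mul_zero]
  rwa [sub_mul, one_mul, coeff_sub, coeff_X_pow_mul', if_pos (hn.trans (Nat.mod_le n p)),
    sub_eq_zero, eq_comm] at hvanish

theorem coeff_cyclotomic_mul_prime_mul_add_eq_mod (hp : p.Prime) (hpm : ¬p ∣ m) (i : ℕ)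
    {a : ℕ} (ha : a < p) :
    (cyclotomic (m * p) R).coeff (i * p + a) = (cyclotomic (m * p) R).coeff (i * p + a % m) := by
  obtain rfl | hm := m.eq_zero_or_pos
  · rw [Nat.mod_zero]
  induction a using Nat.strong_induction_on with
  | _ a ih =>
  rcases lt_or_ge a m with ham | hma
  · rw [Nat.mod_eq_of_lt ham]
  · have hshift := coeff_cyclotomic_mul_prime_eq_coeff_sub (R := R) hm hp hpm
      (n := i * p + a) (by rwa [Nat.mul_add_mod_of_lt ha])
    rw [hshift, Nat.add_sub_assoc hma, ih (a - m) (by omega) (by omega), ← Nat.mod_eq_sub_mod hma]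

end

theorem coeff_modByMonic_X_pow {R : Type*} [Ring R] (f : R[X]) (r k : ℕ) :
    (f %ₘ X ^ r).coeff k = if k < r then f.coeff k else 0 := by
  nontriviality R
  split_ifs with hk
  · conv_rhs => rw [← modByMonic_add_div f (X ^ r)]
    rw [coeff_add, coeff_X_pow_mul', if_neg (by omega), add_zero]
  · refine coeff_eq_zero_of_degree_lt ((degree_modByMonic_lt f (monic_X_pow r)).trans_le ?_)
    rw [degree_X_pow]
    exact_mod_cast not_lt.mp hk

theorem coeff_cycBlock (m p i j t : ℕ) :
    (cycBlock m p i j).coeff t =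
      if t < m ∧ j * m + t < p then (cyclotomic (m * p) ℤ).coeff (i * p + j * m + t)
      else 0 := by
  rw [cycBlock, finsetSum_coeff]
  simp only [apply_ite (fun f : ℤ[X] => f.coeff t), coeff_C_mul_X_pow, coeff_zero, ← ite_and]
  simp only [and_comm (b := t = _), ite_and, Finset.sum_ite_eq, Finset.mem_range]

theorem cycBlock_last_eq_trunc_general (m p : ℕ)
    (hp : p.Prime) (hpm : ¬ p ∣ m) :
    ∀ i < Nat.totient m,
      cycBlock m p i (p / m) = (cycBlock m p i 0) %ₘ X ^ (p % m) := by
  intro i _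
  obtain rfl | hm := m.eq_zero_or_pos
  · simp [cycBlock]
  ext t
  rw [coeff_cycBlock, coeff_modByMonic_X_pow, coeff_cycBlock]
  have hdiv := Nat.div_add_mod' p m
  by_cases ht : t < p % m
  · have htm : t < m := ht.trans (Nat.mod_lt p hm)
    rw [if_pos ⟨htm, by omega⟩, if_pos ht, if_pos ⟨htm, by omega⟩, zero_mul, add_zero,
      add_assoc, coeff_cyclotomic_mul_prime_mul_add_eq_mod hp hpm i (by omega),
      Nat.mul_add_mod_of_lt htm]
  · rw [if_neg (by omega), if_neg ht]

/-- Truncation: the last block `f_{m,p,i,q}` is the truncation of the first block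
`f_{m,p,i,0}` to degree `< r`. -/
theorem cycBlock_last_eq_trunc (m p : ℕ) (hm : 0 < m) (hodd : Odd m) (hsf : Squarefree m)
    (hp : p.Prime) (hpm : ¬ p ∣ m) :
    ∀ i < Nat.totient m,
      cycBlock m p i (p / m) = (cycBlock m p i 0) %ₘ X ^ (p % m) :=
  cycBlock_last_eq_trunc_general m p hp hpm
end

section
/- Let m be an odd squarefree positive integer and p a prime not dividing m, with q = ⌊p/m⌋. With blocks f_{m,p,i,j} defined by the base-x^p then base-x^m digit decomposition of Φ_{mp}, for each 0 ≤ i ≤ φ(m)-1 the first q blocks are all equal: f_{m,p,i,0} = f_{m,p,i,1} = ⋯ = f_{m,p,i,q-1}. -/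
open Polynomial

/-!
Write `X ^ m - 1 = Φ_m * g`, so that `deg g < m`. Since `Φ_m(X ^ p) = Φ_{mp} * Φ_m` for a prime
`p ∤ m`, we get `Φ_{mp} * (X ^ m - 1) = Φ_m(X ^ p) * g`. The coefficient of `X ^ n` on the right
vanishes as soon as `n mod p > deg g`, because `Φ_m(X ^ p)` only has exponents divisible by `p`.
Hence the coefficients `c_n` of `Φ_{mp}` satisfy `c_n = c_{n-m}` whenever `m ≤ n mod p`: inside
each base-`x^p` digit the coefficient sequence is `m`-periodic up to position `p`.
-/

namespace Polynomial

variable {R : Type*}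

theorem coeff_expand_mul_eq_zero [CommSemiring R] {p n : ℕ} (hp : 0 < p) (f : R[X]) {g : R[X]}
    (hg : g.natDegree < n % p) : (expand R p f * g).coeff n = 0 := by
  rw [coeff_mul]
  refine Finset.sum_eq_zero fun ⟨a, b⟩ hab => ?_
  rw [Finset.HasAntidiagonal.mem_antidiagonal] at hab
  rw [coeff_expand hp]
  split_ifs with hpa
  · obtain ⟨s, rfl⟩ := hpa
    have hs : s ≤ n / p := (Nat.le_div_iff_mul_le hp).2 (by rw [mul_comm]; omega)
    have hb : n % p ≤ b := by
      have := Nat.mod_add_div n p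
      have := Nat.mul_le_mul_left p hs
      omega
    rw [coeff_eq_zero_of_natDegree_lt (hg.trans_le hb), mul_zero]
  · rw [zero_mul]

theorem exists_cyclotomic_mul_eq_X_pow_sub_one [CommRing R] [Nontrivial R] {m : ℕ} (hm : 0 < m) :
    ∃ g : R[X], g.natDegree < m ∧ cyclotomic m R * g = X ^ m - 1 := by
  obtain ⟨g, hg⟩ := cyclotomic.dvd_X_pow_sub_one m R
  have hmonic : (cyclotomic m R * g).Monic := hg ▸ monic_X_pow_sub_C 1 hm.ne'
  have hdeg :=
    (cyclotomic.monic m R).natDegree_mul ((cyclotomic.monic m R).of_mul_monic_left hmonic)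
  rw [← hg, ← C_1, natDegree_X_pow_sub_C, natDegree_cyclotomic] at hdeg
  exact ⟨g, by have := Nat.totient_pos.2 hm; omega, hg.symm⟩

theorem cyclotomic_mul_prime_coeff_eq_coeff_sub [CommRing R] [Nontrivial R] {m p n : ℕ}
    (hp : p.Prime) (hpm : ¬ p ∣ m) (hmn : m ≤ n % p) :
    (cyclotomic (m * p) R).coeff n = (cyclotomic (m * p) R).coeff (n - m) := by
  rcases Nat.eq_zero_or_pos m with rfl | hm
  · rfl
  obtain ⟨g, hgdeg, hg⟩ := exists_cyclotomic_mul_eq_X_pow_sub_one (R := R) hm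
  have key : cyclotomic (m * p) R * (X ^ m - 1) = expand R p (cyclotomic m R) * g := by
    rw [← hg, cyclotomic_expand_eq_cyclotomic_mul hp hpm, mul_assoc]
  have hzero := congrArg (coeff · n) key
  simp only [coeff_expand_mul_eq_zero hp.pos _ (hgdeg.trans_le hmn), mul_sub, mul_one, coeff_sub,
    coeff_mul_X_pow', if_pos (hmn.trans (Nat.mod_le n p))] at hzero
  exact (sub_eq_zero.1 hzero).symm

theorem cyclotomic_mul_prime_coeff_add_mul [CommRing R] [Nontrivial R] {m p n : ℕ}
    (hp : p.Prime) (hpm : ¬ p ∣ m) {j : ℕ} (hj : n % p + j * m < p) :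
    (cyclotomic (m * p) R).coeff (n + j * m) = (cyclotomic (m * p) R).coeff n := by
  induction j with
  | zero => simp
  | succ j ih =>
    have hmod : (n + (j + 1) * m) % p = n % p + (j + 1) * m := by
      rw [Nat.add_mod, Nat.mod_eq_of_lt (a := (j + 1) * m) (by omega), Nat.mod_eq_of_lt hj]
    have hm_le : m ≤ (n + (j + 1) * m) % p :=
      hmod ▸ le_add_left (Nat.le_mul_of_pos_left m j.succ_pos)
    have hsub : n + (j + 1) * m - m = n + j * m := by
      rw [add_mul, one_mul, ← add_assoc, Nat.add_sub_cancel]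
    rw [cyclotomic_mul_prime_coeff_eq_coeff_sub hp hpm hm_le, hsub]
    exact ih (by nlinarith)

end Polynomial

theorem cycBlock_repetition_general (m p : ℕ)
    (hp : p.Prime) (hpm : ¬ p ∣ m) :
    ∀ i < Nat.totient m, ∀ j < p / m, cycBlock m p i j = cycBlock m p i 0 := by
  intro i _ j hj
  have hm : 0 < m := (Nat.div_pos_iff.1 (Nat.zero_lt_of_lt hj)).1
  have hjm : (j + 1) * m ≤ p := (Nat.le_div_iff_mul_le hm).1 hj
  refine Finset.sum_congr rfl fun k hk => ?_
  rw [Finset.mem_range] at hk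
  have hkp : (i * p + k) % p = k := Nat.mul_add_mod_of_lt (by nlinarith)
  rw [if_pos (by nlinarith), if_pos (by nlinarith), zero_mul, add_zero, add_right_comm,
    cyclotomic_mul_prime_coeff_add_mul hp hpm (by rw [hkp]; nlinarith)]

/-- Repetition: for each `0 ≤ i ≤ φ(m)-1`, the first `q` blocks are all equal,
`f_{m,p,i,0} = ⋯ = f_{m,p,i,q-1}`. -/
theorem cycBlock_repetition (m p : ℕ) (hm : 0 < m) (hodd : Odd m) (hsf : Squarefree m)
    (hp : p.Prime) (hpm : ¬ p ∣ m) :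
    ∀ i < Nat.totient m, ∀ j < p / m, cycBlock m p i j = cycBlock m p i 0 :=
  cycBlock_repetition_general m p hp hpm
end

section
/- Let m be an odd squarefree positive integer and p a prime not dividing m, r = p mod m. Define, for 0 ≤ i ≤ φ(m)-1, the polynomial h_i(x) := -rem(x^{m - (ir mod m)} · Ψ_m(x) · T_{i+1}Φ_m(x^r), x^m - 1), where T_{i+1} truncates to degree < i+1. Then for i + i' = φ(m) - 1, h_{i'} equals the rotation R_{φ(m)-1-r} applied to the flip F h_i, where F f(x) := x^{m-1} f(1/x) for deg f < m and R_s f := rem(x^{m - (s mod m)} f, x^m - 1). -/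
open Polynomial

/-- Rotation operator `R_s f = rem(x^{m - rem(s,m)} f, x^m - 1)` (with integer `s`). -/
noncomputable def rot (m : ℕ) (s : ℤ) (f : ℤ[X]) : ℤ[X] :=
  (X ^ (m - (s % (m : ℤ)).toNat) * f) %ₘ (X ^ m - 1)

/-- Flip operator `F f = x^{m-1} f(1/x)`, i.e. coefficient reversal in length `m`. -/
noncomputable def polyFlip (m : ℕ) (f : ℤ[X]) : ℤ[X] := f.reflect (m - 1)

/-- `h_i = -rem(x^{m-(ir mod m)} Ψ_m · T_{i+1}Φ_m(x^r), x^m - 1)`, the first block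
`f_{m,p,i,0}` of `Φ_{mp}`. -/
noncomputable def hBlock (m p i : ℕ) : ℤ[X] :=
  -((X ^ (m - (i * (p % m)) % m) *
      (invCyclotomic m * Polynomial.expand ℤ (p % m) ((cyclotomic m ℤ) %ₘ X ^ (i + 1)))) %ₘ
    (X ^ m - 1))

/-!
Both sides have degree `< m`, so it suffices to compare their values at every unit `w` with
`w ^ m = 1` in every commutative ring (the universal one is the root of `X ^ m - 1` in
`ℤ[X] ⧸ (X ^ m - 1)`). There `R_s` becomes multiplication by `w ^ (-s)`, the flip becomes
`f ↦ w⁻¹ f(w⁻¹)`, and `h_i` becomes `-w ^ (-i r) Ψ(w) g_i(w ^ r)` with `g_i = T_{i+1} Φ_m`.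
For `m > 1`, `Φ_m` is palindromic and hence `Ψ_m` anti-palindromic: this turns `Ψ(w⁻¹)` into
`-w ^ φ(m) Ψ(w)` and splits `Φ_m = X ^ (i'+1) rev_i(g_i) + g_{i'}`. Since
`Ψ_m(X) Φ_m(X ^ p) = (X ^ m - 1) Φ_{mp}`, the product `Ψ(w) Φ_m(w ^ r)` vanishes, which expresses
`Ψ(w) g_i(w ^ (-r))` through `Ψ(w) g_{i'}(w ^ r)`. For `m = 1` every such `w` is `1`.
-/

namespace Polynomial

variable {R : Type*}

theorem coeff_modByMonic_X_pow [Ring R] (f : R[X]) (n k : ℕ) :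
    (f %ₘ X ^ n).coeff k = if k < n then f.coeff k else 0 := by
  nontriviality R
  split_ifs with hk
  · conv_rhs => rw [← modByMonic_add_div f (X ^ n)]
    rw [coeff_add, coeff_X_pow_mul', if_neg (not_le.2 hk), add_zero]
  · refine coeff_eq_zero_of_degree_lt ((degree_modByMonic_lt _ (monic_X_pow n)).trans_le ?_)
    rw [degree_X_pow]
    exact_mod_cast not_lt.1 hk

theorem natDegree_modByMonic_X_pow_le [Ring R] (f : R[X]) (n : ℕ) :
    (f %ₘ X ^ (n + 1)).natDegree ≤ n := by
  nontriviality R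
  have h := natDegree_modByMonic_lt f (monic_X_pow (n + 1))
    fun h1 => by simpa using congrArg natDegree h1
  rwa [natDegree_X_pow, Nat.lt_succ_iff] at h

theorem reflect_eq_X_pow_mul_reflect_modByMonic_add [Ring R] {f : R[X]} {i j : ℕ}
    (hf : f.natDegree ≤ i + j + 1) :
    f.reflect (i + j + 1) =
      X ^ (j + 1) * (f %ₘ X ^ (i + 1)).reflect i + f.reflect (i + j + 1) %ₘ X ^ (j + 1) := by
  ext n
  rw [coeff_add, X_pow_mul, coeff_mul_X_pow', coeff_modByMonic_X_pow, coeff_reflect, coeff_reflect]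
  by_cases hn : j + 1 ≤ n
  · rw [if_pos hn, if_neg (by omega), add_zero]
    by_cases hN : n ≤ i + j + 1
    · rw [revAt_le hN, revAt_le (by omega), coeff_modByMonic_X_pow, if_pos (by omega)]
      congr 1; omega
    · rw [revAt_eq_self_of_lt (by omega), revAt_eq_self_of_lt (by omega),
        coeff_modByMonic_X_pow, if_neg (by omega), coeff_eq_zero_of_natDegree_lt (by omega)]
  · rw [if_neg hn, if_pos (by omega), zero_add]

theorem aeval_reflect_eq_smul_aeval_inv [CommSemiring R] {S : Type*} [CommSemiring S] [Algebra R S]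
    (v : Sˣ) {N : ℕ} {f : R[X]} (hf : f.natDegree ≤ N) :
    aeval (v : S) (f.reflect N) = v ^ N • aeval (↑v⁻¹ : S) f := by
  let := v⁻¹.invertible
  have h := eval₂_reflect_mul_pow (algebraMap R S) (↑v⁻¹ : S) N f hf
  rw [invOf_units, inv_inv] at h
  rw [aeval_def, aeval_def, ← h, Units.smul_def, smul_eq_mul, Units.val_pow_eq_pow_val,
    mul_left_comm, ← mul_pow, Units.mul_inv, one_pow, mul_one]

theorem aeval_eq_smul_aeval_inv_modByMonic_add [CommRing R] {S : Type*} [CommRing S]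
    [Algebra R S] {f : R[X]} {i j : ℕ} (hf : f.natDegree ≤ i + j + 1)
    (hpal : f.reflect (i + j + 1) = f) (v : Sˣ) :
    aeval (v : S) f =
      v ^ (i + j + 1) • aeval (↑v⁻¹ : S) (f %ₘ X ^ (i + 1)) + aeval (v : S) (f %ₘ X ^ (j + 1)) := by
  conv_lhs => rw [← hpal, reflect_eq_X_pow_mul_reflect_modByMonic_add hf, hpal]
  rw [map_add, map_mul, map_pow, aeval_X,
    aeval_reflect_eq_smul_aeval_inv v (natDegree_modByMonic_X_pow_le f i),
    ← Units.val_pow_eq_pow_val, ← smul_eq_mul, ← Units.smul_def, smul_smul, ← pow_add,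
    show j + 1 + i = i + j + 1 by omega]

end Polynomial

theorem natDegree_invCyclotomic (m : ℕ) : (invCyclotomic m).natDegree = m - m.totient := by
  rw [invCyclotomic, natDegree_divByMonic _ (cyclotomic.monic m ℤ), natDegree_cyclotomic,
    ← C_1, natDegree_X_pow_sub_C]

theorem reflect_cyclotomic {m : ℕ} (hm : 1 < m) :
    (cyclotomic m ℤ).reflect m.totient = cyclotomic m ℤ := by
  have hζ := Complex.isPrimitiveRoot_exp m (by omega)
  set ζ := Complex.exp (2 * Real.pi * Complex.I / m)
  have hroot : aeval ζ ((cyclotomic m ℤ).reflect m.totient) = 0 := by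
    have hζinv : aeval ζ⁻¹ (cyclotomic m ℤ) = 0 := by
      rw [aeval_def, eval₂_eq_eval_map, map_cyclotomic]
      exact hζ.inv.isRoot_cyclotomic (by omega)
    have h := aeval_reflect_eq_smul_aeval_inv (Units.mk0 ζ (hζ.ne_zero (by omega)))
      (natDegree_cyclotomic m ℤ).le
    rwa [Units.val_inv_eq_inv_val, Units.val_mk0, hζinv, smul_zero] at h
  have hdvd : cyclotomic m ℤ ∣ (cyclotomic m ℤ).reflect m.totient := by
    rw [cyclotomic_eq_minpoly hζ (by omega)] at hroot ⊢
    exact minpoly.isIntegrallyClosed_dvd (hζ.isIntegral (by omega)) hroot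
  have hcoeff : ((cyclotomic m ℤ).reflect m.totient).coeff m.totient = 1 := by
    rw [coeff_reflect, revAt_le le_rfl, Nat.sub_self, cyclotomic_coeff_zero ℤ hm]
  have hdeg : ((cyclotomic m ℤ).reflect m.totient).natDegree ≤ m.totient :=
    natDegree_reflect_le.trans (by rw [natDegree_cyclotomic, max_self])
  exact eq_of_monic_of_dvd_of_natDegree_le (cyclotomic.monic m ℤ)
    (monic_of_natDegree_le_of_coeff_eq_one _ hdeg hcoeff) hdvd (by rwa [natDegree_cyclotomic])

theorem reflect_invCyclotomic {m : ℕ} (hm : 1 < m) :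
    (invCyclotomic m).reflect (m - m.totient) = -invCyclotomic m := by
  have h := reflect_mul (cyclotomic m ℤ) (invCyclotomic m) (natDegree_cyclotomic m ℤ).le
    (natDegree_invCyclotomic m).le
  have hX : (X ^ m - 1 : ℤ[X]).reflect m = -(X ^ m - 1) := by
    simp [reflect_sub, reflect_monomial]
  rw [cyclotomic_mul_invCyclotomic, Nat.add_sub_cancel' (Nat.totient_le m), hX,
    reflect_cyclotomic hm, ← cyclotomic_mul_invCyclotomic, ← mul_neg] at h
  exact (mul_left_cancel₀ (cyclotomic.monic m ℤ).ne_zero h).symm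


theorem hBlock_eq_neg_rot (m p i : ℕ) :
    hBlock m p i = -rot m (i * (p % m) : ℕ)
      (invCyclotomic m * expand ℤ (p % m) (cyclotomic m ℤ %ₘ X ^ (i + 1))) := by
  rw [hBlock, rot, ← Int.natCast_mod, Int.toNat_natCast]

theorem degree_rot_lt {m : ℕ} (hm : 0 < m) (s : ℤ) (f : ℤ[X]) : (rot m s f).degree < m := by
  rw [rot, ← degree_X_pow_sub_C hm (1 : ℤ), C_1]
  exact degree_modByMonic_lt _ (by simpa using monic_X_pow_sub_C (1 : ℤ) hm.ne')

theorem degree_hBlock_lt {m : ℕ} (hm : 0 < m) (p i : ℕ) : (hBlock m p i).degree < m := by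
  rw [hBlock_eq_neg_rot, degree_neg]
  exact degree_rot_lt hm _ _

theorem natDegree_hBlock_le {m : ℕ} (hm : 0 < m) (p i : ℕ) :
    (hBlock m p i).natDegree ≤ m - 1 := by
  rcases eq_or_ne (hBlock m p i) 0 with h | h
  · simp [h]
  · exact Nat.le_sub_one_of_lt ((natDegree_lt_iff_degree_lt h).2 (degree_hBlock_lt hm p i))

section RootOfUnity

variable {S : Type*} [CommRing S] {m : ℕ} {w : Sˣ}

theorem aeval_invCyclotomic_mul_aeval_cyclotomic {p : ℕ} (hp : p.Prime) (hpm : ¬p ∣ m) {x : S}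
    (hx : x ^ m = 1) :
    aeval x (invCyclotomic m) * aeval (x ^ (p % m)) (cyclotomic m ℤ) = 0 := by
  rw [← pow_eq_pow_mod p hx, ← expand_aeval, ← map_mul, cyclotomic_expand_eq_cyclotomic_mul hp hpm,
    mul_left_comm, mul_comm (invCyclotomic m), cyclotomic_mul_invCyclotomic, map_mul]
  simp [hx]

theorem aeval_inv_invCyclotomic (hm : 1 < m) (hw : w ^ m = 1) :
    aeval (↑w⁻¹ : S) (invCyclotomic m) = -(w ^ m.totient • aeval (w : S) (invCyclotomic m)) := by
  have h := aeval_reflect_eq_smul_aeval_inv (S := S) w (natDegree_invCyclotomic m).le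
  rw [reflect_invCyclotomic hm, map_neg] at h
  calc aeval (↑w⁻¹ : S) (invCyclotomic m)
      = w ^ m.totient • w ^ (m - m.totient) • aeval (↑w⁻¹ : S) (invCyclotomic m) := by
        rw [smul_smul, ← pow_add, Nat.add_sub_cancel' (Nat.totient_le m), hw, one_smul]
    _ = -(w ^ m.totient • aeval (w : S) (invCyclotomic m)) := by rw [← h, smul_neg]

theorem aeval_rot (hm : 0 < m) (hw : w ^ m = 1) (s : ℤ) (f : ℤ[X]) :
    aeval (w : S) (rot m s f) = w ^ (-s) • aeval (w : S) f := by
  have hroot : aeval (w : S) (X ^ m - 1 : ℤ[X]) = 0 := by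
    simp [← Units.val_pow_eq_pow_val, hw]
  have hexp : ((m - (s % m).toNat : ℕ) : ℤ) % m = -s % m := by
    have h0 := Int.emod_nonneg s (by omega : (m : ℤ) ≠ 0)
    have h1 := Int.emod_lt_of_pos s (by omega : (0 : ℤ) < m)
    rw [show ((m - (s % m).toNat : ℕ) : ℤ) = -s + m * (s / m + 1) by
      rw [Int.emod_def] at h0 h1 ⊢; rw [mul_add, mul_one]; omega, Int.add_mul_emod_self_left]
  rw [rot, aeval_modByMonic_eq_self_of_root hroot, map_mul, map_pow, aeval_X,
    ← Units.val_pow_eq_pow_val, ← zpow_natCast, zpow_eq_zpow_emod' _ hw, hexp,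
    ← zpow_eq_zpow_emod' _ hw, Units.smul_def, smul_eq_mul]

theorem aeval_polyFlip (hm : 0 < m) (hw : w ^ m = 1) {f : ℤ[X]} (hf : f.natDegree ≤ m - 1) :
    aeval (w : S) (polyFlip m f) = w⁻¹ • aeval (↑w⁻¹ : S) f := by
  rw [polyFlip, aeval_reflect_eq_smul_aeval_inv w hf,
    eq_inv_of_mul_eq_one_left (a := w ^ (m - 1)) (by rw [← pow_succ, Nat.sub_add_cancel hm, hw])]

theorem aeval_hBlock (hm : 0 < m) (hw : w ^ m = 1) (p i : ℕ) :
    aeval (w : S) (hBlock m p i) = -(w ^ (-((i * (p % m) : ℕ) : ℤ)) •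
      (aeval (w : S) (invCyclotomic m) *
        aeval (↑(w ^ (p % m)) : S) (cyclotomic m ℤ %ₘ X ^ (i + 1)))) := by
  rw [hBlock_eq_neg_rot, map_neg, aeval_rot hm hw, map_mul, expand_aeval,
    Units.val_pow_eq_pow_val]

theorem aeval_invCyclotomic_mul_aeval_modByMonic_X_pow (hm : 1 < m) {p : ℕ} (hp : p.Prime)
    (hpm : ¬p ∣ m) (hw : w ^ m = 1) {i i' : ℕ} (hsum : i + i' + 1 = m.totient) :
    aeval (w : S) (invCyclotomic m) * aeval (↑(w ^ (p % m)) : S) (cyclotomic m ℤ %ₘ X ^ (i' + 1)) =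
      -((w ^ (p % m)) ^ m.totient • (aeval (w : S) (invCyclotomic m) *
        aeval (↑(w ^ (p % m))⁻¹ : S) (cyclotomic m ℤ %ₘ X ^ (i + 1)))) := by
  have h := aeval_invCyclotomic_mul_aeval_cyclotomic hp hpm (x := (w : S))
    (by rw [← Units.val_pow_eq_pow_val, hw, Units.val_one])
  rw [← Units.val_pow_eq_pow_val, aeval_eq_smul_aeval_inv_modByMonic_add
    (by rw [natDegree_cyclotomic, hsum]) (by rw [hsum, reflect_cyclotomic hm]) (w ^ (p % m)), hsum,
    mul_add, mul_smul_comm] at h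
  linear_combination h

theorem aeval_hBlock_symmetry (hm : 0 < m) {p : ℕ} (hp : p.Prime) (hpm : ¬p ∣ m)
    (hw : w ^ m = 1) {i i' : ℕ} (hsum : i + i' + 1 = m.totient) :
    aeval (w : S) (hBlock m p i') =
      aeval (w : S) (rot m ((m.totient : ℤ) - 1 - (p % m : ℕ)) (polyFlip m (hBlock m p i))) := by
  rw [aeval_rot hm hw, aeval_polyFlip hm hw (natDegree_hBlock_le hm p i)]
  rcases Nat.lt_or_ge 1 m with hm1 | hm1
  · rw [aeval_hBlock hm (by rw [inv_pow, hw, inv_one]) p i, aeval_hBlock hm hw p i',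
      aeval_inv_invCyclotomic hm1 hw, inv_pow,
      aeval_invCyclotomic_mul_aeval_modByMonic_X_pow hm1 hp hpm hw hsum]
    simp only [neg_mul, smul_mul_assoc, smul_neg, neg_neg, smul_smul]
    congr 1
    simp only [← zpow_natCast, ← zpow_neg_one, ← zpow_mul, ← zpow_add]
    congr 1
    rw [← hsum]
    push_cast
    ring
  · obtain rfl : m = 1 := by omega
    obtain ⟨rfl, rfl⟩ : i = 0 ∧ i' = 0 := by rw [Nat.totient_one] at hsum; omega
    rw [pow_one] at hw
    simp [hw]

end RootOfUnity

theorem eq_of_degree_lt_of_aeval_rootOfUnity_eq {m : ℕ} (hm : 0 < m) {f g : ℤ[X]}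
    (hf : f.degree < m) (hg : g.degree < m)
    (h : ∀ (S : Type) [CommRing S] (w : Sˣ), w ^ m = 1 → aeval (w : S) f = aeval (w : S) g) :
    f = g := by
  have hx := AdjoinRoot.eval₂_root (X ^ m - 1 : ℤ[X])
  rw [eval₂_sub, eval₂_X_pow, eval₂_one, sub_eq_zero] at hx
  have hfg := h _ (Units.ofPowEqOne _ m hx hm.ne') (Units.pow_ofPowEqOne hx hm.ne')
  rw [Units.val_ofPowEqOne] at hfg
  replace hfg : AdjoinRoot.mk (X ^ m - 1) f = AdjoinRoot.mk (X ^ m - 1) g := by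
    convert hfg using 1 <;> exact (AdjoinRoot.aeval_eq _).symm
  rw [AdjoinRoot.mk_eq_mk] at hfg
  have hdeg : (X ^ m - 1 : ℤ[X]).degree = m := by rw [← C_1, degree_X_pow_sub_C hm]
  refine sub_eq_zero.1 (eq_zero_of_dvd_of_degree_lt hfg ?_)
  rw [hdeg]
  exact (degree_sub_le f g).trans_lt (max_lt hf hg)

theorem hBlock_symmetry_general (m p : ℕ) (hm : 0 < m)
    (hp : p.Prime) (hpm : ¬ p ∣ m) (i i' : ℕ) (hsum : i + i' = Nat.totient m - 1) :
    hBlock m p i' =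
      rot m ((Nat.totient m : ℤ) - 1 - (p % m : ℕ)) (polyFlip m (hBlock m p i)) := by
  have hsum' : i + i' + 1 = m.totient := by
    have := Nat.totient_pos.2 hm
    omega
  exact eq_of_degree_lt_of_aeval_rootOfUnity_eq hm (degree_hBlock_lt hm p i')
    (degree_rot_lt hm _ _) fun _ _ _ hw => aeval_hBlock_symmetry hm hp hpm hw hsum'

/-- Symmetry: if `i + i' = φ(m) - 1` then `h_{i'} = R_{φ(m)-1-r} (F h_i)`. -/
theorem hBlock_symmetry (m p : ℕ) (hm : 0 < m) (hodd : Odd m) (hsf : Squarefree m)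
    (hp : p.Prime) (hpm : ¬ p ∣ m) (i i' : ℕ) (hi : i < Nat.totient m)
    (hi' : i' < Nat.totient m) (hsum : i + i' = Nat.totient m - 1) :
    hBlock m p i' =
      rot m ((Nat.totient m : ℤ) - 1 - (p % m : ℕ)) (polyFlip m (hBlock m p i)) :=
  hBlock_symmetry_general m p hm hp hpm i i' hsum
end

section
/- Let m be a positive integer, u, v integers, f a polynomial of degree < m, and g = Σ_t c_t x^t a polynomial of degree < m. Then Σ_t c_t · R_{u - tv} f = R_u( f · g(x^{rem(v,m)}) mod (x^m - 1) ), where R_s f := rem(x^{m - rem(s,m)} f, x^m - 1). -/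
/-!
Modulo `X ^ m - 1` the class `ζ` of `X` satisfies `ζ ^ m = 1`, so `R_s f` is the reduction of
`ζ ^ (-s) * f` and `g(X ^ rem(v, m))` that of `∑ c_t ζ ^ (t v)`: both sides are the reduction of
`∑ c_t ζ ^ (t v - u) * f`. We compute in `AdjoinRoot (X ^ m - 1)`, where reduction modulo the monic
`X ^ m - 1` is the `ℤ`-linear map `AdjoinRoot.modByMonicHom`.
-/

open Polynomial

open AdjoinRoot

theorem AdjoinRoot.root_pow_eq_one {R : Type*} [CommRing R] (m : ℕ) :
    root (X ^ m - 1 : R[X]) ^ m = 1 := by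
  have h := mk_self (f := (X ^ m - 1 : R[X]))
  rwa [map_sub, map_pow, mk_X, map_one, sub_eq_zero] at h

theorem AdjoinRoot.mk_modByMonic {R : Type*} [CommRing R] {g : R[X]} (hg : g.Monic) (p : R[X]) :
    mk g (p %ₘ g) = mk g p := by
  rw [← modByMonicHom_mk hg, mk_leftInverse hg]

theorem Int.natCast_sub_toNat_emod_modEq {m : ℕ} (hm : 0 < m) (s : ℤ) :
    ((m - (s % m).toNat : ℕ) : ℤ) ≡ -s [ZMOD m] := by
  have hnonneg : 0 ≤ s % m := Int.emod_nonneg s (by omega)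
  have hlt : s % m < m := Int.emod_lt_of_pos s (by omega)
  rw [Nat.cast_sub (by omega), Int.toNat_of_nonneg hnonneg]
  simpa using (Int.modEq_zero_iff_dvd.2 (dvd_refl (m : ℤ))).sub (Int.mod_modEq s m)

theorem Int.natCast_toNat_emod_modEq {m : ℕ} (hm : 0 < m) (v : ℤ) :
    ((v % m).toNat : ℤ) ≡ v [ZMOD m] := by
  rw [Int.toNat_of_nonneg (Int.emod_nonneg v (by omega))]
  exact Int.mod_modEq v m

theorem rot_exponent_modEq {m : ℕ} (hm : 0 < m) (u v : ℤ) (t : ℕ) :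
    m - ((u - t * v) % m).toNat ≡ m - (u % m).toNat + t * (v % m).toNat [MOD m] := by
  rw [← Int.natCast_modEq_iff]
  calc ((m - ((u - t * v) % m).toNat : ℕ) : ℤ) ≡ -(u - t * v) [ZMOD m] :=
        Int.natCast_sub_toNat_emod_modEq hm _
    _ = -u + t * v := by ring
    _ ≡ ((m - (u % m).toNat : ℕ) : ℤ) + t * ((v % m).toNat : ℤ) [ZMOD m] :=
        (Int.natCast_sub_toNat_emod_modEq hm u).symm.add
          ((Int.natCast_toNat_emod_modEq hm v).symm.mul_left _)
    _ = ((m - (u % m).toNat + t * (v % m).toNat : ℕ) : ℤ) := by push_cast; rfl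

theorem rot_eq_modByMonicHom {m : ℕ} (hq : (X ^ m - 1 : ℤ[X]).Monic) (s : ℤ) (f : ℤ[X]) :
    rot m s f = modByMonicHom hq (root _ ^ (m - (s % m).toNat) * mk _ f) := by
  rw [← mk_X, ← map_pow, ← map_mul, modByMonicHom_mk]
  rfl

theorem sum_rot_eq_rot_mul_expand_general (m : ℕ) (hm : 0 < m) (u v : ℤ) (f g : ℤ[X])
    (hg : g.degree < m) :
    ∑ t ∈ Finset.range m, C (g.coeff t) * rot m (u - t * v) f =
      rot m u ((f * Polynomial.expand ℤ ((v % (m : ℤ)).toNat) g) %ₘ (X ^ m - 1)) := by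
  have hq : (X ^ m - 1 : ℤ[X]).Monic := by simpa using monic_X_pow_sub_C (1 : ℤ) hm.ne'
  have hgm : g.natDegree < m := by
    rcases eq_or_ne g 0 with rfl | hg0
    · simpa using hm
    · exact (natDegree_lt_iff_degree_lt hg0).2 hg
  simp_rw [rot_eq_modByMonicHom hq, C_mul', ← map_smul, ← map_sum]
  congr 1
  rw [mk_modByMonic hq, map_mul, ← aeval_eq (expand ℤ _ g), expand_aeval, aeval_eq_sum_range' hgm,
    Finset.mul_sum, Finset.mul_sum]
  refine Finset.sum_congr rfl fun t _ => ?_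
  rw [pow_eq_pow_of_modEq (rot_exponent_modEq hm u v t) (root_pow_eq_one m)]
  ring

/-- `Σ_t c_t · R_{u - tv} f = R_u (f · g(x^{rem(v,m)}) mod (x^m - 1))`, where
`g = Σ_t c_t x^t` has degree `< m`. -/
theorem sum_rot_eq_rot_mul_expand (m : ℕ) (hm : 0 < m) (u v : ℤ) (f g : ℤ[X])
    (hf : f.degree < m) (hg : g.degree < m) :
    ∑ t ∈ Finset.range m, C (g.coeff t) * rot m (u - t * v) f =
      rot m u ((f * Polynomial.expand ℤ ((v % (m : ℤ)).toNat) g) %ₘ (X ^ m - 1)) :=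
  sum_rot_eq_rot_mul_expand_general m hm u v f g hg
end

section
/- Let m be an odd squarefree integer and p a prime with p ∤ m, r = p mod m. Then for every 0 ≤ i ≤ φ(m)-1, writing Φ_m = Σ_s a_s x^s, we have the identity mod x^m - 1: Σ_{s=0}^{i} a_s x^{((i-s)r) mod m} Ψ_m(x) ≡ -Σ_{s=i+1}^{φ(m)} a_s x^{((i-s)r) mod m} Ψ_m(x) (mod x^m - 1). -/
open Polynomial

/-!
The two sides together form `∑_{s ≤ φ(m)} a_s X^{(i-s)r mod m} Ψ_m`. Modulo `X^m - 1` the exponent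
`(i-s)r` may be replaced by `ip + sk` with `k = (m-1)p ≡ -r (mod m)`, which turns the sum into
`X^{ip} Φ_m(X^k) Ψ_m`. As `k` is coprime to `m`, `X ↦ X^k` permutes the primitive `m`-th roots of
unity, so `Φ_m ∣ Φ_m(X^k)`, and `Φ_m Ψ_m = X^m - 1`.
-/

theorem pow_sub_one_dvd_pow_sub_pow_of_modEq {R : Type*} [CommRing R] (x : R) {m a b : ℕ}
    (h : a ≡ b [MOD m]) : x ^ m - 1 ∣ x ^ a - x ^ b := by
  wlog hba : b ≤ a generalizing a b
  · simpa using (this h.symm (by omega)).neg_right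
  obtain ⟨k, hk⟩ := (Nat.modEq_iff_dvd' hba).mp h.symm
  have hx : x ^ a - x ^ b = x ^ b * (x ^ (m * k) - 1) := by
    rw [mul_sub, ← pow_add, ← hk, Nat.add_sub_cancel' hba, mul_one]
  rw [hx]
  exact (pow_one_sub_dvd_pow_mul_sub_one x m k).mul_left _

namespace Polynomial

theorem cyclotomic_dvd_comp_X_pow {n k : ℕ} (hk : k.Coprime n) :
    cyclotomic n ℤ ∣ (cyclotomic n ℤ).comp (X ^ k) := by
  rcases Nat.eq_zero_or_pos n with rfl | hn
  · simp
  have hμ := Complex.isPrimitiveRoot_exp n hn.ne'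
  rw [cyclotomic_eq_minpoly hμ hn]
  refine minpoly.isIntegrallyClosed_dvd (hμ.isIntegral hn) ?_
  rw [aeval_comp, ← cyclotomic_eq_minpoly hμ hn, aeval_X_pow,
    cyclotomic_eq_minpoly (hμ.pow_of_coprime k hk) hn]
  exact minpoly.aeval ℤ _

theorem cyclotomic_mul_invCyclotomic (m : ℕ) : cyclotomic m ℤ * invCyclotomic m = X ^ m - 1 := by
  obtain ⟨q, hq⟩ := cyclotomic.dvd_X_pow_sub_one m ℤ
  rw [invCyclotomic, hq, mul_divByMonic_cancel_left _ (cyclotomic.monic m ℤ)]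

theorem comp_X_pow_eq_sum_range {R : Type*} [CommSemiring R] (f : R[X]) (k : ℕ) {N : ℕ}
    (hN : f.natDegree < N) :
    f.comp (X ^ k) = ∑ s ∈ Finset.range N, C (f.coeff s) * X ^ (s * k) := by
  conv_lhs => rw [f.as_sum_range' N hN]
  simp [pow_mul']

theorem X_pow_sub_one_dvd_sum_coeff_cyclotomic_mul_invCyclotomic {m k : ℕ} (hk : k.Coprime m)
    (j : ℕ) : (X ^ m - 1 : ℤ[X]) ∣ ∑ s ∈ Finset.range (m.totient + 1),
      C ((cyclotomic m ℤ).coeff s) * X ^ (j + s * k) * invCyclotomic m := by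
  obtain ⟨q, hq⟩ := cyclotomic_dvd_comp_X_pow hk
  have hsum : ∑ s ∈ Finset.range (m.totient + 1),
      C ((cyclotomic m ℤ).coeff s) * X ^ (j + s * k) * invCyclotomic m =
        X ^ j * (cyclotomic m ℤ).comp (X ^ k) * invCyclotomic m := by
    rw [comp_X_pow_eq_sum_range _ k (N := m.totient + 1) (by simp [natDegree_cyclotomic]),
      Finset.mul_sum, Finset.sum_mul]
    exact Finset.sum_congr rfl fun s _ => by ring
  rw [hsum, hq, ← cyclotomic_mul_invCyclotomic]
  exact ⟨X ^ j * q, by ring⟩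

end Polynomial

theorem toNat_sub_mul_emod_modEq {m : ℕ} (hm : 1 ≤ m) (i s r : ℕ) :
    ((((i : ℤ) - s) * (r % m : ℕ)) % m).toNat ≡ i * r + s * ((m - 1) * r) [MOD m] := by
  rw [← ZMod.natCast_eq_natCast_iff, ← Int.cast_natCast,
    Int.toNat_of_nonneg (Int.emod_nonneg _ (by omega))]
  push_cast [ZMod.intCast_mod, ZMod.natCast_mod, Nat.cast_sub hm, ZMod.natCast_self]
  ring

theorem sum_low_congr_neg_sum_high_general (m p : ℕ) (hp : p.Prime) (hpm : ¬ p ∣ m) (i : ℕ)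
    (hi : i < Nat.totient m) :
    (X ^ m - 1 : ℤ[X]) ∣
      ((∑ s ∈ Finset.range (i + 1),
          C ((cyclotomic m ℤ).coeff s) *
            X ^ ((((i : ℤ) - s) * (p % m : ℕ)) % (m : ℤ)).toNat * invCyclotomic m) +
        ∑ s ∈ Finset.Icc (i + 1) (Nat.totient m),
          C ((cyclotomic m ℤ).coeff s) *
            X ^ ((((i : ℤ) - s) * (p % m : ℕ)) % (m : ℤ)).toNat * invCyclotomic m) := by
  have hm : 1 ≤ m := Nat.one_le_iff_ne_zero.mpr fun h => hpm (h ▸ dvd_zero p)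
  have hk : ((m - 1) * p).Coprime m :=
    ((Nat.coprime_self_sub_left hm).mpr (Nat.coprime_one_left m)).mul_left
      ((Nat.Prime.coprime_iff_not_dvd hp).mpr hpm)
  rw [← Finset.Ico_add_one_right_eq_Icc, Finset.sum_range_add_sum_Ico _ (by omega),
    ← dvd_sub_left (X_pow_sub_one_dvd_sum_coeff_cyclotomic_mul_invCyclotomic hk (i * p)),
    ← Finset.sum_sub_distrib]
  refine Finset.dvd_sum fun s _ => ?_
  have hX := pow_sub_one_dvd_pow_sub_pow_of_modEq (X : ℤ[X]) (toNat_sub_mul_emod_modEq hm i s p)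
  convert hX.mul_left (C ((cyclotomic m ℤ).coeff s) * invCyclotomic m) using 1
  ring

/-- `Σ_{s=0}^{i} a_s x^{((i-s)r) mod m} Ψ_m ≡ -Σ_{s=i+1}^{φ(m)} a_s x^{((i-s)r) mod m} Ψ_m
(mod x^m - 1)`, where `a_s` are the coefficients of `Φ_m`, `r = p mod m`, and the
exponents `(i-s)r` are reduced mod `m` into `[0,m)`. -/
theorem sum_low_congr_neg_sum_high (m p : ℕ) (hm : 0 < m) (hodd : Odd m)
    (hsf : Squarefree m) (hp : p.Prime) (hpm : ¬ p ∣ m) (i : ℕ) (hi : i < Nat.totient m) :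
    (X ^ m - 1 : ℤ[X]) ∣
      ((∑ s ∈ Finset.range (i + 1),
          C ((cyclotomic m ℤ).coeff s) *
            X ^ ((((i : ℤ) - s) * (p % m : ℕ)) % (m : ℤ)).toNat * invCyclotomic m) +
        ∑ s ∈ Finset.Icc (i + 1) (Nat.totient m),
          C ((cyclotomic m ℤ).coeff s) *
            X ^ ((((i : ℤ) - s) * (p % m : ℕ)) % (m : ℤ)).toNat * invCyclotomic m) :=
  sum_low_congr_neg_sum_high_general m p hp hpm i hi
end
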